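/- arXiv:0710.5685 — 3 statements merged into one kernel-verified Lean document; each statement's English description precedes it below -/
import Mathlib

section
/- For every x ∈ ℝⁿ, w₀(x) = 1/n if and only if w_{n-1}(x) = n. -/
open Real MeasureTheory Filter Set

/-- Distance from a real number to the nearest integer. -/
noncomputable def dnint (t : ℝ) : ℝ := |t - round t|

/-- `‖y‖`: max over coordinates of the distance to the nearest integer. -/
noncomputable def vnorm {n : ℕ} (y : Fin n → ℝ) : ℝ := ⨆ i, dnint (y i)

/-- Supremum norm of an integer vector, as a real number. -/
noncomputable def isupnorm {n : ℕ} (q : Fin n → ℤ) : ℝ := ⨆ i, |(q i : ℝ)|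

/-- The simultaneous Diophantine exponent
`w₀(x) = sup {w : ‖q x‖ < q^{-w} for infinitely many q ∈ ℕ}`. -/
noncomputable def wsim (n : ℕ) (x : Fin n → ℝ) : EReal :=
  sSup {w : EReal | ∃ v : ℝ, w = (v : EReal) ∧
    {q : ℕ | 0 < q ∧ vnorm (fun i => (q : ℝ) * x i) < (q : ℝ) ^ (-v)}.Infinite}

/-- The dual Diophantine exponent
`w_{n-1}(x) = sup {w : ‖q.x‖ < |q|^{-w} for infinitely many q ∈ ℤⁿ \ {0}}`. -/
noncomputable def wdual (n : ℕ) (x : Fin n → ℝ) : EReal :=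
  sSup {w : EReal | ∃ v : ℝ, w = (v : EReal) ∧
    {q : Fin n → ℤ | q ≠ 0 ∧
      dnint (∑ i, (q i : ℝ) * x i) < isupnorm q ^ (-v)}.Infinite}

/-!
Dirichlet's pigeonhole argument gives infinitely many solutions at the exponents `1/n`
(simultaneous) and `n` (dual); when the errors become arbitrarily small without the solutions
being infinitely many, some solution is exact and its multiples are solutions at every exponent.
Hence `w₀(x) ≥ 1/n` and `w_{n-1}(x) ≥ n` are attained, and the theorem amounts to
`w₀(x) > 1/n ↔ w_{n-1}(x) > n`, a qualitative form of Khintchine's transference.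

Simultaneous to dual: for `‖q x‖ < q^{-v}` with `v > 1/n`, pigeonholing `a ∈ [0, M)ⁿ`,
`M ≈ q^{1/n}`, modulo `q` makes `q ∣ a · p` for the nearest integer point `p` to `q x`, whence
`‖a · x‖ ≤ n M ‖q x‖ / q`, which beats `|a|^{-w}` for some `w > n`.
Dual to simultaneous: for `‖a · x‖ < |a|^{-u}` with `u > n` and `|aⱼ| = |a|`, pigeonholing
`s ≤ K^{n-1} |aⱼ|`, `K ≈ |a|^{u/n}`, by the `K`-boxes of `s xᵢ` (`i ≠ j`) and by a residue modulo
`aⱼ` yields `t` with `‖t xᵢ‖ < 1/K` for `i ≠ j` and an integer `pⱼ` with `a · p = t round (a · x)`;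
solving for `t xⱼ - pⱼ` gives `‖t x‖ ≲ 1/K`, which beats `t^{-v}` for some `v > 1/n`.
-/

lemma Set.Finite.exists_mem_nonpos_of_forall_exists_lt {α : Type*} {S : Set α} (hS : S.Finite)
    {f : α → ℝ} (h : ∀ ε > 0, ∃ a ∈ S, f a < ε) : ∃ a ∈ S, f a ≤ 0 := by
  by_contra! hpos
  obtain ⟨a₀, ha₀, -⟩ := h 1 one_pos
  obtain ⟨b, hb, hmin⟩ := S.exists_min_image f hS ⟨a₀, ha₀⟩
  obtain ⟨a, ha, hlt⟩ := h (f b) (hpos b hb)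
  exact (hmin a ha).not_gt hlt

lemma EReal.sSup_setOf_coe_eq_coe_iff {P : ℝ → Prop} {c : ℝ} (hc : P c) :
    sSup {w : EReal | ∃ v : ℝ, w = v ∧ P v} = c ↔ ∀ v, P v → v ≤ c := by
  refine ⟨fun h v hv => ?_, fun h => le_antisymm ?_ (le_sSup ⟨c, rfl, hc⟩)⟩
  · exact EReal.coe_le_coe_iff.mp (h ▸ le_sSup ⟨v, rfl, hv⟩)
  · exact sSup_le fun _ ⟨v, hw, hv⟩ => hw ▸ EReal.coe_le_coe_iff.mpr (h v hv)

lemma eventually_mul_rpow_lt (C : ℝ) {e ε : ℝ} (he : e < 0) (hε : 0 < ε) :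
    ∀ᶠ y : ℝ in atTop, C * y ^ e < ε := by
  have h0 : Tendsto (fun y : ℝ => y ^ e) atTop (nhds 0) := by
    simpa using tendsto_rpow_neg_atTop (neg_pos.mpr he)
  simpa using (h0.const_mul C).eventually (gt_mem_nhds (by simpa using hε))

lemma exists_lt_pow_le_two_mul_rpow {n : ℕ} (hn : n ≠ 0) {q : ℝ} (hq : 1 ≤ q) :
    ∃ M : ℕ, q < M ^ n ∧ (M : ℝ) ≤ 2 * q ^ (1 / n : ℝ) := by
  have hr : 1 ≤ q ^ (1 / n : ℝ) := Real.one_le_rpow hq (by positivity)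
  refine ⟨⌊q ^ (1 / n : ℝ)⌋₊ + 1, ?_, ?_⟩
  · calc q = (q ^ (1 / n : ℝ)) ^ n := by rw [one_div, Real.rpow_inv_natCast_pow (by linarith) hn]
      _ < _ := pow_lt_pow_left₀ (by exact_mod_cast Nat.lt_floor_add_one _) (by linarith) hn
  · push_cast
    linarith [Nat.floor_le (zero_le_one.trans hr)]

lemma abs_sum_mul_le_card_mul {ι : Type*} (s : Finset ι) {f g : ι → ℝ} {A E : ℝ}
    (hf : ∀ i ∈ s, |f i| ≤ A) (hg : ∀ i ∈ s, |g i| ≤ E) :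
    |∑ i ∈ s, f i * g i| ≤ s.card * (A * E) := by
  calc |∑ i ∈ s, f i * g i| ≤ ∑ i ∈ s, |f i * g i| := Finset.abs_sum_le_sum_abs _ _
    _ ≤ ∑ _i ∈ s, A * E := Finset.sum_le_sum fun i hi => by
        rw [abs_mul]
        exact mul_le_mul (hf i hi) (hg i hi) (abs_nonneg _) ((abs_nonneg _).trans (hf i hi))
    _ = s.card * (A * E) := by rw [Finset.sum_const, nsmul_eq_mul]

lemma abs_mul_sub_le_of_sum_mul_eq {ι : Type*} [Fintype ι] [DecidableEq ι] {a p : ι → ℤ}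
    {x : ι → ℝ} {b m : ℤ} {t ε : ℝ} {j : ι} (hmax : ∀ i, |(a i : ℝ)| ≤ |(a j : ℝ)|)
    (hε : 0 ≤ ε) (hclose : ∀ i ≠ j, |t * x i - p i| ≤ ε)
    (h : ∑ i, (a i : ℝ) * p i - b * t = a j * m) :
    |(a j : ℝ)| * |t * x j - (p j - m)| ≤
      |t| * |∑ i, (a i : ℝ) * x i - b| + Fintype.card ι * (|(a j : ℝ)| * ε) := by
  have hsplit := Finset.add_sum_erase Finset.univ (fun i => (a i : ℝ) * (t * x i - p i))
    (Finset.mem_univ j)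
  have hsum : ∑ i, (a i : ℝ) * (t * x i - p i) =
      t * ∑ i, (a i : ℝ) * x i - ∑ i, (a i : ℝ) * p i := by
    rw [Finset.mul_sum, ← Finset.sum_sub_distrib]
    exact Finset.sum_congr rfl fun i _ => by ring
  have key : (a j : ℝ) * (t * x j - (p j - m)) = t * (∑ i, (a i : ℝ) * x i - b) -
      ∑ i ∈ Finset.univ.erase j, (a i : ℝ) * (t * x i - p i) := by
    linear_combination hsplit + hsum - h
  have hrest : |∑ i ∈ Finset.univ.erase j, (a i : ℝ) * (t * x i - p i)| ≤
      Fintype.card ι * (|(a j : ℝ)| * ε) :=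
    (abs_sum_mul_le_card_mul _ (fun i _ => hmax i)
      fun i hi => hclose i (Finset.ne_of_mem_erase hi)).trans
      (mul_le_mul_of_nonneg_right (by exact_mod_cast Finset.card_le_univ _)
        (mul_nonneg (abs_nonneg _) hε))
  rw [← abs_mul, key, ← abs_mul]
  exact (abs_sub _ _).trans (add_le_add_right hrest _)

lemma floor_fract_mul_mem_Ico (r : ℝ) {K : ℕ} (hK : 0 < K) :
    ⌊Int.fract r * K⌋ ∈ Finset.Ico (0 : ℤ) K := by
  have hK' : (0 : ℝ) < K := by exact_mod_cast hK
  refine Finset.mem_Ico.mpr ⟨Int.floor_nonneg.mpr (by positivity), Int.floor_lt.mpr ?_⟩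
  push_cast
  nlinarith [Int.fract_lt_one r]

lemma abs_fract_sub_fract_lt_of_floor_eq {r s : ℝ} {K : ℕ} (hK : 0 < K)
    (h : ⌊Int.fract r * K⌋ = ⌊Int.fract s * K⌋) : |Int.fract r - Int.fract s| < 1 / K := by
  have hK' : (0 : ℝ) < K := by exact_mod_cast hK
  have := Int.abs_sub_lt_one_of_floor_eq_floor h
  rwa [← sub_mul, abs_mul, abs_of_pos hK', ← lt_div_iff₀ hK'] at this

/-- Pigeonhole: sort `s ≤ K ^ |ι| * A` by the `K`-boxes of the fractional parts of `s * y` and by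
the residue of `g s` modulo `A`. -/
lemma exists_abs_sub_floor_lt_and_modEq {ι : Type*} [Fintype ι] [DecidableEq ι] (y : ι → ℝ)
    (g : ℕ → ℤ) {K A : ℕ} (hK : 0 < K) (hA : 0 < A) :
    ∃ s₂ s₁ : ℕ, s₂ < s₁ ∧ s₁ ≤ K ^ Fintype.card ι * A ∧
      (∀ i, |((s₁ - s₂ : ℕ) : ℝ) * y i - ((⌊s₁ * y i⌋ - ⌊s₂ * y i⌋ : ℤ) : ℝ)| < 1 / K) ∧
      g s₁ ≡ g s₂ [ZMOD A] := by
  let box : ℕ → (ι → ℤ) × ℤ := fun s => (fun i => ⌊Int.fract (s * y i) * K⌋, g s % A)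
  have hA' : (0 : ℤ) < A := by exact_mod_cast hA
  let boxes : Finset ((ι → ℤ) × ℤ) :=
    Fintype.piFinset (fun _ => Finset.Ico (0 : ℤ) K) ×ˢ Finset.Ico (0 : ℤ) A
  have hmaps : Set.MapsTo box (Finset.range (K ^ Fintype.card ι * A + 1)) boxes := fun s _ =>
    Finset.mem_coe.mpr <| Finset.mem_product.mpr
      ⟨Fintype.mem_piFinset.mpr fun i => floor_fract_mul_mem_Ico _ hK,
        Finset.mem_Ico.mpr ⟨Int.emod_nonneg _ hA'.ne', Int.emod_lt_of_pos _ hA'⟩⟩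
  obtain ⟨s₁, hs₁, s₂, hs₂, hne, hbox⟩ :=
    Finset.exists_ne_map_eq_of_card_lt_of_maps_to (by simp [boxes, Fintype.card_piFinset]) hmaps
  wlog hlt : s₂ < s₁ generalizing s₁ s₂
  · exact this s₂ hs₂ s₁ hs₁ hne.symm hbox.symm (hne.lt_or_gt.resolve_right hlt)
  refine ⟨s₂, s₁, hlt, Nat.lt_succ_iff.mp (Finset.mem_range.mp hs₁), fun i => ?_,
    (Prod.ext_iff.mp hbox).2⟩
  rw [Nat.cast_sub hlt.le]
  convert abs_fract_sub_fract_lt_of_floor_eq hK (congrFun (Prod.ext_iff.mp hbox).1 i) using 2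
  rw [Int.fract, Int.fract]
  push_cast
  ring

lemma dnint_nonneg (t : ℝ) : 0 ≤ dnint t := abs_nonneg _

lemma dnint_le_abs_sub (t : ℝ) (z : ℤ) : dnint t ≤ |t - z| := round_le t z

lemma dnint_natCast_mul_le (k : ℕ) (t : ℝ) : dnint (k * t) ≤ k * dnint t := by
  calc dnint (k * t) ≤ |k * t - ((k * round t : ℤ) : ℝ)| := dnint_le_abs_sub _ _
    _ = k * dnint t := by push_cast; rw [← mul_sub, abs_mul, Nat.abs_cast]; rfl

section norms

variable {n : ℕ}

lemma dnint_le_vnorm (y : Fin n → ℝ) (i : Fin n) : dnint (y i) ≤ vnorm y :=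
  le_ciSup (f := fun i => dnint (y i)) (Finite.bddAbove_range _) i

lemma vnorm_nonneg (y : Fin n → ℝ) : 0 ≤ vnorm y :=
  Real.iSup_nonneg fun i => dnint_nonneg (y i)

lemma vnorm_lt [NeZero n] {y : Fin n → ℝ} {c : ℝ} (h : ∀ i, dnint (y i) < c) : vnorm y < c := by
  obtain ⟨i, hi⟩ := exists_eq_ciSup_of_finite (f := fun i => dnint (y i))
  rw [vnorm, ← hi]
  exact h i

lemma abs_le_isupnorm (a : Fin n → ℤ) (i : Fin n) : |(a i : ℝ)| ≤ isupnorm a :=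
  le_ciSup (f := fun i => |(a i : ℝ)|) (Finite.bddAbove_range _) i

lemma isupnorm_le {a : Fin n → ℤ} {c : ℝ} (h : ∀ i, |(a i : ℝ)| ≤ c) (hc : 0 ≤ c) :
    isupnorm a ≤ c :=
  Real.iSup_le h hc

lemma one_le_isupnorm {a : Fin n → ℤ} (ha : a ≠ 0) : 1 ≤ isupnorm a := by
  obtain ⟨i, hi⟩ := Function.ne_iff.mp ha
  exact le_trans (by exact_mod_cast Int.one_le_abs hi) (abs_le_isupnorm a i)

lemma exists_abs_eq_isupnorm [NeZero n] (a : Fin n → ℤ) : ∃ j, |(a j : ℝ)| = isupnorm a :=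
  exists_eq_ciSup_of_finite

lemma tendsto_isupnorm_cofinite : Tendsto (isupnorm (n := n)) cofinite atTop := by
  refine tendsto_atTop_mono (fun a => (pi_norm_le_iff_of_nonneg (x := a) ?_).2 fun i => ?_) ?_
  · exact Real.iSup_nonneg fun i => abs_nonneg _
  · rw [Int.norm_eq_abs]; exact abs_le_isupnorm a i
  · rw [← cocompact_eq_cofinite]; exact tendsto_norm_cocompact_atTop

end norms

section solutions

variable {n : ℕ} (x : Fin n → ℝ)

def simSolutions (v : ℝ) : Set ℕ :=
  {q : ℕ | 0 < q ∧ vnorm (fun i => (q : ℝ) * x i) < (q : ℝ) ^ (-v)}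

def dualSolutions (v : ℝ) : Set (Fin n → ℤ) :=
  {a : Fin n → ℤ | a ≠ 0 ∧ dnint (∑ i, (a i : ℝ) * x i) < isupnorm a ^ (-v)}

variable {x}

lemma infinite_simSolutions_of_vnorm_nonpos [NeZero n] {q : ℕ} (hq : 0 < q)
    (h : vnorm (fun i => (q : ℝ) * x i) ≤ 0) (v : ℝ) : (simSolutions x v).Infinite := by
  refine Set.infinite_of_injective_forall_mem (f := fun k : ℕ => (k + 1) * q)
    (fun k l hkl => by simpa using Nat.eq_of_mul_eq_mul_right hq hkl) fun k => ⟨by positivity, ?_⟩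
  refine vnorm_lt fun i => lt_of_le_of_lt ?_ (by positivity)
  calc dnint ((((k + 1) * q : ℕ) : ℝ) * x i) = dnint (((k + 1 : ℕ) : ℝ) * (q * x i)) := by
        push_cast; ring_nf
    _ ≤ (k + 1 : ℕ) * dnint (q * x i) := dnint_natCast_mul_le _ _
    _ ≤ 0 := mul_nonpos_of_nonneg_of_nonpos (by positivity)
        ((dnint_le_vnorm (fun i => (q : ℝ) * x i) i).trans h)

lemma infinite_dualSolutions_of_dnint_nonpos {a : Fin n → ℤ} (ha : a ≠ 0)
    (h : dnint (∑ i, (a i : ℝ) * x i) ≤ 0) (v : ℝ) : (dualSolutions x v).Infinite := by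
  have hinj : Function.Injective fun k : ℕ => ((k : ℤ) + 1) • a :=
    (smul_left_injective ℤ ha).comp fun k l hkl => by simpa using hkl
  refine Set.infinite_of_injective_forall_mem hinj fun k => ?_
  have hka : ((k : ℤ) + 1) • a ≠ 0 := smul_ne_zero (by omega) ha
  refine ⟨hka, lt_of_le_of_lt ?_ (Real.rpow_pos_of_pos (one_pos.trans_le (one_le_isupnorm hka)) _)⟩
  calc dnint (∑ i, ((((k : ℤ) + 1) • a) i : ℝ) * x i)
        = dnint (((k + 1 : ℕ) : ℝ) * ∑ i, (a i : ℝ) * x i) := by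
        simp only [Pi.smul_apply, smul_eq_mul, Finset.mul_sum]; push_cast; ring_nf
    _ ≤ (k + 1 : ℕ) * dnint (∑ i, (a i : ℝ) * x i) := dnint_natCast_mul_le _ _
    _ ≤ 0 := mul_nonpos_of_nonneg_of_nonpos (by positivity) h

lemma infinite_simSolutions_of_forall_exists_vnorm_lt [NeZero n] {v : ℝ}
    (h : ∀ ε > 0, ∃ q ∈ simSolutions x v, vnorm (fun i => (q : ℝ) * x i) < ε) :
    (simSolutions x v).Infinite := fun hfin => by
  obtain ⟨q, hq, hq0⟩ := hfin.exists_mem_nonpos_of_forall_exists_lt h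
  exact infinite_simSolutions_of_vnorm_nonpos hq.1 hq0 v hfin

lemma infinite_dualSolutions_of_forall_exists_dnint_lt {v : ℝ}
    (h : ∀ ε > 0, ∃ a ∈ dualSolutions x v, dnint (∑ i, (a i : ℝ) * x i) < ε) :
    (dualSolutions x v).Infinite := fun hfin => by
  obtain ⟨a, ha, ha0⟩ := hfin.exists_mem_nonpos_of_forall_exists_lt h
  exact infinite_dualSolutions_of_dnint_nonpos ha.1 ha0 v hfin

end solutions

section dirichlet

variable {n : ℕ} (x : Fin n → ℝ)

lemma dirichlet_simultaneous {N : ℕ} (hN : 0 < N) :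
    ∃ q : ℕ, 0 < q ∧ q ≤ N ^ n ∧ ∀ i, dnint (q * x i) < 1 / N := by
  obtain ⟨s₂, s₁, hlt, hle, hclose, -⟩ :=
    exists_abs_sub_floor_lt_and_modEq x (fun _ => 0) hN one_pos
  refine ⟨s₁ - s₂, by omega, by simpa using (Nat.sub_le s₁ s₂).trans hle, fun i => ?_⟩
  exact (dnint_le_abs_sub _ _).trans_lt (hclose i)

lemma dirichlet_dual [NeZero n] {N : ℕ} (hN : 0 < N) :
    ∃ a : Fin n → ℤ, a ≠ 0 ∧ isupnorm a ≤ N ∧ dnint (∑ i, (a i : ℝ) * x i) < 1 / N ^ n := by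
  let σ : (Fin n → ℤ) → ℝ := fun c => ∑ i, (c i : ℝ) * x i
  have hmaps : Set.MapsTo (fun c => ⌊Int.fract (σ c) * (N ^ n : ℕ)⌋)
      (Fintype.piFinset fun _ => Finset.Ico (0 : ℤ) (N + 1) : Finset (Fin n → ℤ))
      (Finset.Ico (0 : ℤ) (N ^ n : ℕ)) :=
    fun c _ => Finset.mem_coe.mpr (floor_fract_mul_mem_Ico _ (by positivity))
  have hcard : (Finset.Ico (0 : ℤ) (N ^ n : ℕ)).card
      < (Fintype.piFinset fun _ : Fin n => Finset.Ico (0 : ℤ) (N + 1)).card := by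
    simp only [Int.card_Ico, sub_zero, Int.toNat_natCast, Fintype.card_piFinset,
      Finset.prod_const, Finset.card_univ, Fintype.card_fin]
    rw [show ((N : ℤ) + 1).toNat = N + 1 by omega]
    exact Nat.pow_lt_pow_left (Nat.lt_succ_self N) (NeZero.ne n)
  obtain ⟨c₁, hc₁, c₂, hc₂, hne, hbox⟩ := Finset.exists_ne_map_eq_of_card_lt_of_maps_to hcard hmaps
  have hclose := abs_fract_sub_fract_lt_of_floor_eq (by positivity) hbox
  simp only [Fintype.mem_piFinset, Finset.mem_Ico] at hc₁ hc₂
  refine ⟨c₁ - c₂, sub_ne_zero.mpr hne, isupnorm_le (fun i => ?_) (by positivity), ?_⟩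
  · have : |c₁ i - c₂ i| ≤ N := abs_le.mpr ⟨by linarith [hc₁ i, hc₂ i], by linarith [hc₁ i, hc₂ i]⟩
    exact_mod_cast this
  · calc dnint (∑ i, (((c₁ - c₂) i : ℤ) : ℝ) * x i)
        ≤ |∑ i, (((c₁ - c₂) i : ℤ) : ℝ) * x i - ((⌊σ c₁⌋ - ⌊σ c₂⌋ : ℤ) : ℝ)| := dnint_le_abs_sub _ _
      _ = |Int.fract (σ c₁) - Int.fract (σ c₂)| := by
        simp only [σ, Int.fract, Pi.sub_apply, Int.cast_sub, sub_mul, Finset.sum_sub_distrib]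
        ring_nf
      _ < 1 / N ^ n := by exact_mod_cast hclose

end dirichlet

section exponents

variable {n : ℕ} [NeZero n] (x : Fin n → ℝ)

lemma infinite_simSolutions_one_div : (simSolutions x (1 / n)).Infinite := by
  refine infinite_simSolutions_of_forall_exists_vnorm_lt fun ε hε => ?_
  obtain ⟨N, hN⟩ := exists_nat_one_div_lt hε
  obtain ⟨q, hq0, hqN, hq⟩ := dirichlet_simultaneous x N.succ_pos
  have hvn : vnorm (fun i => (q : ℝ) * x i) < 1 / (N + 1 : ℕ) := vnorm_lt hq
  refine ⟨q, ⟨hq0, hvn.trans_le ?_⟩, hvn.trans (by simpa using hN)⟩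
  have hqN' : (q : ℝ) ^ (n : ℝ)⁻¹ ≤ (N + 1 : ℕ) := by
    rw [Real.rpow_inv_le_iff_of_pos (by positivity) (by positivity)
      (Nat.cast_pos.mpr (Nat.pos_of_neZero n)),
      Real.rpow_natCast]
    exact_mod_cast hqN
  rw [Real.rpow_neg (by positivity), one_div (n : ℝ), ← one_div]
  exact one_div_le_one_div_of_le (by positivity) hqN'

lemma infinite_dualSolutions_natCast : (dualSolutions x n).Infinite := by
  refine infinite_dualSolutions_of_forall_exists_dnint_lt fun ε hε => ?_
  obtain ⟨N, hN⟩ := exists_nat_one_div_lt hε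
  obtain ⟨a, ha0, haN, ha⟩ := dirichlet_dual x N.succ_pos
  have hpow : 1 / ((N + 1 : ℕ) : ℝ) ^ n ≤ isupnorm a ^ (-(n : ℝ)) := by
    rw [Real.rpow_neg (zero_le_one.trans (one_le_isupnorm ha0)), Real.rpow_natCast, one_div]
    exact inv_anti₀ (pow_pos (one_pos.trans_le (one_le_isupnorm ha0)) n)
      (pow_le_pow_left₀ (zero_le_one.trans (one_le_isupnorm ha0)) haN n)
  refine ⟨a, ⟨ha0, ha.trans_le hpow⟩, ha.trans_le ?_⟩
  calc 1 / ((N + 1 : ℕ) : ℝ) ^ n ≤ 1 / ((N + 1 : ℕ) : ℝ) :=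
        one_div_le_one_div_of_le (by positivity) (le_self_pow₀ (by simp) (NeZero.ne n))
    _ ≤ ε := by simpa using hN.le

end exponents

section transference

variable {n : ℕ} (x : Fin n → ℝ)

lemma exists_dnint_sum_le_of_lt_pow {q M : ℕ} (hq : 0 < q) (hqM : q < M ^ n) :
    ∃ a : Fin n → ℤ, a ≠ 0 ∧ isupnorm a ≤ M ∧
      dnint (∑ i, (a i : ℝ) * x i) ≤ n * M * vnorm (fun i => (q : ℝ) * x i) / q := by
  let p : Fin n → ℤ := fun i => round ((q : ℝ) * x i)
  have hq' : (0 : ℤ) < q := by exact_mod_cast hq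
  have hmaps : Set.MapsTo (fun c : Fin n → ℤ => (∑ i, c i * p i) % q)
      (Fintype.piFinset fun _ => Finset.Ico (0 : ℤ) M : Finset (Fin n → ℤ))
      (Finset.Ico (0 : ℤ) q) := fun c _ =>
    Finset.mem_coe.mpr (Finset.mem_Ico.mpr ⟨Int.emod_nonneg _ hq'.ne', Int.emod_lt_of_pos _ hq'⟩)
  have hcard : (Finset.Ico (0 : ℤ) q).card
      < (Fintype.piFinset fun _ : Fin n => Finset.Ico (0 : ℤ) M).card := by
    simpa [Fintype.card_piFinset] using hqM
  obtain ⟨c₁, hc₁, c₂, hc₂, hne, hres⟩ :=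
    Finset.exists_ne_map_eq_of_card_lt_of_maps_to hcard hmaps
  simp only [Fintype.mem_piFinset, Finset.mem_Ico] at hc₁ hc₂
  set a := c₁ - c₂
  obtain ⟨b, hb⟩ : (q : ℤ) ∣ ∑ i, a i * p i := by
    simpa [a, sub_mul, Finset.sum_sub_distrib] using (Int.ModEq.dvd hres.symm)
  have habs : ∀ i, |(a i : ℝ)| ≤ M := fun i => by
    have : |a i| ≤ M := abs_le.mpr ⟨by simp only [a, Pi.sub_apply]; linarith [hc₁ i, hc₂ i],
      by simp only [a, Pi.sub_apply]; linarith [hc₁ i, hc₂ i]⟩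
    exact_mod_cast this
  refine ⟨a, sub_ne_zero.mpr hne, isupnorm_le habs (by positivity), ?_⟩
  have hqR : (0 : ℝ) < q := by exact_mod_cast hq
  have key : (q : ℝ) * (∑ i, (a i : ℝ) * x i - b) = ∑ i, (a i : ℝ) * ((q : ℝ) * x i - p i) := by
    have hb' : ∑ i, (a i : ℝ) * p i = q * b := by exact_mod_cast hb
    simp only [mul_sub, Finset.sum_sub_distrib, hb', Finset.mul_sum]
    ring_nf
  calc dnint (∑ i, (a i : ℝ) * x i) ≤ |∑ i, (a i : ℝ) * x i - b| := dnint_le_abs_sub _ _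
    _ = |∑ i, (a i : ℝ) * ((q : ℝ) * x i - p i)| / q := by
        rw [← key, abs_mul, abs_of_pos hqR, mul_div_cancel_left₀ _ hqR.ne']
    _ ≤ (Finset.univ : Finset (Fin n)).card * (M * vnorm (fun i => (q : ℝ) * x i)) / q := by
        gcongr
        exact abs_sum_mul_le_card_mul _ (fun i _ => habs i)
          (fun i _ => dnint_le_vnorm (fun i => (q : ℝ) * x i) i)
    _ = n * M * vnorm (fun i => (q : ℝ) * x i) / q := by simp [mul_assoc]

lemma exists_dnint_mul_le_of_dnint_sum [NeZero n] {a : Fin n → ℤ} (ha : a ≠ 0) {K : ℕ}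
    (hK : 0 < K) :
    ∃ t : ℕ, 0 < t ∧ (t : ℝ) ≤ K ^ (n - 1) * isupnorm a ∧
      ∀ i, dnint (t * x i) ≤ K ^ (n - 1) * dnint (∑ i, (a i : ℝ) * x i) + n / K := by
  obtain ⟨j, hj⟩ := exists_abs_eq_isupnorm a
  have hX : 1 ≤ |(a j : ℝ)| := hj ▸ one_le_isupnorm ha
  have haj : a j ≠ 0 := by rintro h; norm_num [h] at hX
  set b := round (∑ i, (a i : ℝ) * x i)
  obtain ⟨s₂, s₁, hlt, hle, hclose, hmod⟩ := exists_abs_sub_floor_lt_and_modEq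
    (fun i : {i // i ≠ j} => x i) (fun s => ∑ i, a i * ⌊(s : ℝ) * x i⌋ - b * s) hK
    (Int.natAbs_pos.mpr haj)
  rw [show Fintype.card {i // i ≠ j} = n - 1 by simp] at hle
  set t := s₁ - s₂
  set p : Fin n → ℤ := fun i => ⌊(s₁ : ℝ) * x i⌋ - ⌊(s₂ : ℝ) * x i⌋
  obtain ⟨m, hm⟩ : a j ∣ ∑ i, a i * p i - b * t := by
    convert Int.natAbs_dvd.mp hmod.symm.dvd using 1
    simp only [p, t, Nat.cast_sub hlt.le, mul_sub, Finset.sum_sub_distrib]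
    ring
  have htX : (t : ℝ) ≤ K ^ (n - 1) * |(a j : ℝ)| :=
    calc (t : ℝ) ≤ s₁ := by exact_mod_cast Nat.sub_le _ _
      _ ≤ ((K ^ (n - 1) * (a j).natAbs : ℕ) : ℝ) := by exact_mod_cast hle
      _ = K ^ (n - 1) * |(a j : ℝ)| := by push_cast [Nat.cast_natAbs]; rfl
  have hKn : (1 : ℝ) / K ≤ n / K := by
    gcongr; exact_mod_cast Nat.one_le_iff_ne_zero.mpr (NeZero.ne n)
  refine ⟨t, by omega, hj ▸ htX, fun i => ?_⟩
  rcases eq_or_ne i j with rfl | hij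
  · have hfix := abs_mul_sub_le_of_sum_mul_eq (x := x) (t := t) (ε := 1 / K)
      (fun k => hj ▸ abs_le_isupnorm a k) (by positivity) (fun k hk => (hclose ⟨k, hk⟩).le) (by exact_mod_cast hm)
    refine (dnint_le_abs_sub _ (p i - m)).trans (le_of_mul_le_mul_left ?_ (one_pos.trans_le hX))
    calc |(a i : ℝ)| * |t * x i - ((p i - m : ℤ) : ℝ)|
        ≤ t * dnint (∑ i, (a i : ℝ) * x i) + n * (|(a i : ℝ)| * (1 / K)) := by
          simpa [dnint] using hfix
      _ ≤ K ^ (n - 1) * |(a i : ℝ)| * dnint (∑ i, (a i : ℝ) * x i) + n * (|(a i : ℝ)| * (1 / K)) :=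
          by gcongr; exact dnint_nonneg _
      _ = |(a i : ℝ)| * (K ^ (n - 1) * dnint (∑ i, (a i : ℝ) * x i) + n / K) := by ring
  · exact (dnint_le_abs_sub _ (p i)).trans ((hclose ⟨i, hij⟩).le.trans
      (hKn.trans (le_add_of_nonneg_left (mul_nonneg (by positivity) (dnint_nonneg _)))))

lemma exists_dnint_sum_lt_of_mem_simSolutions [NeZero n] {v : ℝ} {q : ℕ}
    (hq : q ∈ simSolutions x v) :
    ∃ a : Fin n → ℤ, a ≠ 0 ∧ isupnorm a ≤ 2 * (q : ℝ) ^ (1 / n : ℝ) ∧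
      dnint (∑ i, (a i : ℝ) * x i) < 2 * n * (q : ℝ) ^ (1 / n - v - 1 : ℝ) := by
  have hn : (0 : ℝ) < n := Nat.cast_pos.mpr (Nat.pos_of_neZero n)
  have hq1 : (1 : ℝ) ≤ q := by exact_mod_cast hq.1
  have hqR : (0 : ℝ) < q := one_pos.trans_le hq1
  obtain ⟨M, hqM, hM⟩ := exists_lt_pow_le_two_mul_rpow (NeZero.ne n) hq1
  obtain ⟨a, ha0, haM, hδ⟩ := exists_dnint_sum_le_of_lt_pow x hq.1 (by exact_mod_cast hqM)
  refine ⟨a, ha0, haM.trans hM, ?_⟩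
  calc dnint (∑ i, (a i : ℝ) * x i) ≤ n * M * vnorm (fun i => (q : ℝ) * x i) / q := hδ
    _ ≤ n * (2 * (q : ℝ) ^ (1 / n : ℝ)) * vnorm (fun i => (q : ℝ) * x i) / q := by
        gcongr; exact vnorm_nonneg _
    _ < n * (2 * (q : ℝ) ^ (1 / n : ℝ)) * (q : ℝ) ^ (-v) / q := by
        gcongr; exact hq.2
    _ = 2 * n * (q : ℝ) ^ (1 / n - v - 1 : ℝ) := by
        rw [sub_eq_add_neg _ v, Real.rpow_sub_one hqR.ne', Real.rpow_add hqR]; ring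

lemma exists_infinite_dualSolutions_of_infinite_simSolutions [NeZero n] {v : ℝ} (hv : 1 / n < v)
    (hinf : (simSolutions x v).Infinite) : ∃ w, (n : ℝ) < w ∧ (dualSolutions x w).Infinite := by
  have hn : (0 : ℝ) < n := Nat.cast_pos.mpr (Nat.pos_of_neZero n)
  have hnv : 1 < n * v := by rwa [div_lt_iff₀' hn] at hv
  set s := 1 / n - v - 1 with hs_def
  set w := (n * v + 2 * n - 1) / 2 with hw_def
  have hs : s < 0 := by linarith
  have hsw : s + w / n < 0 := by
    rw [show s + w / n = (1 - n * v) / (2 * n) by rw [hs_def, hw_def]; field_simp; ring]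
    exact div_neg_of_neg_of_pos (by linarith) (by positivity)
  refine ⟨w, by linarith, infinite_dualSolutions_of_forall_exists_dnint_lt fun ε hε => ?_⟩
  have hev : ∀ᶠ q : ℕ in atTop,
      (2 * n * 2 ^ w * (q : ℝ) ^ (s + w / n) < 1 ∧ 2 * n * (q : ℝ) ^ s < ε) ∧ 1 ≤ (q : ℝ) :=
    tendsto_natCast_atTop_atTop.eventually
      (((eventually_mul_rpow_lt _ hsw one_pos).and (eventually_mul_rpow_lt _ hs hε)).and
        (eventually_ge_atTop 1))
  obtain ⟨q, hq, ⟨h1, h2⟩, hq1⟩ :=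
    ((Nat.frequently_atTop_iff_infinite.mpr hinf).and_eventually hev).exists
  have hqR : (0 : ℝ) < q := one_pos.trans_le hq1
  obtain ⟨a, ha0, haq, hδ⟩ := exists_dnint_sum_lt_of_mem_simSolutions x hq
  refine ⟨a, ⟨ha0, hδ.trans ?_⟩, hδ.trans h2⟩
  have h2w : (2 : ℝ) ^ w * 2 ^ (-w) = 1 := by
    rw [← Real.rpow_add two_pos, add_neg_cancel, Real.rpow_zero]
  have hqs : (q : ℝ) ^ (s + w / n) * (q : ℝ) ^ (1 / n * -w) = (q : ℝ) ^ s := by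
    rw [← Real.rpow_add hqR]; congr 1; ring
  calc 2 * n * (q : ℝ) ^ s
      = 2 * n * (2 ^ w * 2 ^ (-w)) * ((q : ℝ) ^ (s + w / n) * (q : ℝ) ^ (1 / n * -w)) := by
        rw [h2w, hqs, mul_one]
    _ = 2 * n * 2 ^ w * (q : ℝ) ^ (s + w / n) * (2 * (q : ℝ) ^ (1 / n : ℝ)) ^ (-w) := by
        rw [Real.mul_rpow two_pos.le (by positivity), ← Real.rpow_mul hqR.le]
        ring
    _ < (2 * (q : ℝ) ^ (1 / n : ℝ)) ^ (-w) := mul_lt_of_lt_one_left (by positivity) h1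
    _ ≤ isupnorm a ^ (-w) :=
        Real.rpow_le_rpow_of_nonpos (one_pos.trans_le (one_le_isupnorm ha0)) haq (by linarith)

lemma exists_dnint_mul_le_of_mem_dualSolutions [NeZero n] {u : ℝ} (hu : 0 < u)
    {a : Fin n → ℤ} (ha : a ∈ dualSolutions x u) {K : ℕ} (hK₁ : isupnorm a ^ (u / n) ≤ K)
    (hK₂ : (K : ℝ) ≤ 2 * isupnorm a ^ (u / n)) :
    ∃ t : ℕ, 0 < t ∧ (t : ℝ) ≤ (K : ℝ) ^ ((n : ℝ) - 1 + n / u) ∧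
      ∀ i, dnint (t * x i) ≤ (2 ^ n + n) * (K : ℝ) ^ (-1 : ℝ) := by
  have hn : (0 : ℝ) < n := Nat.cast_pos.mpr (Nat.pos_of_neZero n)
  have hX0 : 0 < isupnorm a := one_pos.trans_le (one_le_isupnorm ha.1)
  have hKR : (0 : ℝ) < K := (Real.rpow_pos_of_pos hX0 _).trans_le hK₁
  obtain ⟨t, ht0, htK, hclose⟩ := exists_dnint_mul_le_of_dnint_sum x ha.1 (Nat.cast_pos.mp hKR)
  have hpow : (K : ℝ) ^ (n - 1) = (K : ℝ) ^ ((n : ℝ) - 1) := by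
    rw [← Real.rpow_natCast, Nat.cast_sub (Nat.one_le_iff_ne_zero.mpr (NeZero.ne n)), Nat.cast_one]
  have hXu : isupnorm a ^ (-u) ≤ 2 ^ n * (K : ℝ) ^ (-(n : ℝ)) :=
    calc isupnorm a ^ (-u) = (isupnorm a ^ (u / n)) ^ (-(n : ℝ)) := by
          rw [← Real.rpow_mul hX0.le]; field_simp
      _ ≤ ((K : ℝ) / 2) ^ (-(n : ℝ)) :=
          Real.rpow_le_rpow_of_nonpos (by positivity) (by linarith) (by linarith)
      _ = 2 ^ n * (K : ℝ) ^ (-(n : ℝ)) := by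
          rw [Real.div_rpow hKR.le zero_le_two, Real.rpow_neg zero_le_two, Real.rpow_natCast]
          field_simp
  have hδ : (K : ℝ) ^ (n - 1) * dnint (∑ i, (a i : ℝ) * x i) ≤ 2 ^ n * K ^ (-1 : ℝ) :=
    calc (K : ℝ) ^ (n - 1) * dnint (∑ i, (a i : ℝ) * x i)
        ≤ K ^ ((n : ℝ) - 1) * (2 ^ n * K ^ (-(n : ℝ))) := by
          rw [hpow]; gcongr; exact ha.2.le.trans hXu
      _ = 2 ^ n * K ^ (-1 : ℝ) := by
          rw [mul_left_comm, ← Real.rpow_add hKR]; congr 2; ring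
  refine ⟨t, ht0, ?_, fun i => ?_⟩
  · calc (t : ℝ) ≤ K ^ (n - 1) * isupnorm a := htK
      _ = K ^ ((n : ℝ) - 1) * (isupnorm a ^ (u / n)) ^ (n / u) := by
        rw [hpow, ← Real.rpow_mul hX0.le, div_mul_div_comm, mul_comm u,
          div_self (mul_pos hn hu).ne', Real.rpow_one]
      _ ≤ K ^ ((n : ℝ) - 1) * (K : ℝ) ^ (n / u) := by gcongr
      _ = (K : ℝ) ^ ((n : ℝ) - 1 + n / u) := by rw [← Real.rpow_add hKR]
  · calc dnint (t * x i) ≤ K ^ (n - 1) * dnint (∑ i, (a i : ℝ) * x i) + n / K := hclose i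
      _ ≤ 2 ^ n * K ^ (-1 : ℝ) + n * K ^ (-1 : ℝ) :=
          add_le_add hδ (by rw [Real.rpow_neg_one, div_eq_mul_inv])
      _ = (2 ^ n + n) * (K : ℝ) ^ (-1 : ℝ) := by ring

lemma exists_infinite_simSolutions_of_infinite_dualSolutions [NeZero n] {u : ℝ}
    (hu : (n : ℝ) < u) (hinf : (dualSolutions x u).Infinite) :
    ∃ v, 1 / (n : ℝ) < v ∧ (simSolutions x v).Infinite := by
  have hn : (1 : ℝ) ≤ n := by exact_mod_cast Nat.one_le_iff_ne_zero.mpr (NeZero.ne n)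
  have hu0 : 0 < u := by linarith
  set e := (n : ℝ) - 1 + n / u with he_def
  have he : 0 < e := by positivity
  have hen : 1 / (n : ℝ) < 1 / e :=
    one_div_lt_one_div_of_lt he (by linarith [(div_lt_one hu0).mpr hu])
  set v := (1 / (n : ℝ) + 1 / e) / 2 with hv_def
  have hve : e * v - 1 < 0 := by
    have : v < 1 / e := by linarith
    rw [lt_div_iff₀ he] at this
    linarith
  have hv0 : 0 < v := by rw [hv_def]; positivity
  refine ⟨v, by linarith, infinite_simSolutions_of_forall_exists_vnorm_lt fun ε hε => ?_⟩
  have hK : Tendsto (fun a : Fin n → ℤ => ((⌈isupnorm a ^ (u / n)⌉₊ : ℕ) : ℝ)) cofinite atTop :=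
    tendsto_natCast_atTop_atTop.comp <| tendsto_nat_ceil_atTop.comp <|
      (tendsto_rpow_atTop (by positivity)).comp tendsto_isupnorm_cofinite
  obtain ⟨a, ha, h1, h2⟩ := ((frequently_cofinite_iff_infinite.mpr hinf).and_eventually
    (hK.eventually ((eventually_mul_rpow_lt (2 ^ n + n) hve one_pos).and
      (eventually_mul_rpow_lt (2 ^ n + n) neg_one_lt_zero hε)))).exists
  set K := ⌈isupnorm a ^ (u / n)⌉₊
  have hX1 : 1 ≤ isupnorm a ^ (u / n) := Real.one_le_rpow (one_le_isupnorm ha.1) (by positivity)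
  obtain ⟨t, ht0, hte, hclose⟩ := exists_dnint_mul_le_of_mem_dualSolutions x hu0 ha
    (Nat.le_ceil _) (by linarith [Nat.ceil_lt_add_one (zero_le_one.trans hX1)])
  have hKR : (0 : ℝ) < K := one_pos.trans_le (hX1.trans (Nat.le_ceil _))
  refine ⟨t, ⟨ht0, vnorm_lt fun i => (hclose i).trans_lt ?_⟩,
    vnorm_lt fun i => (hclose i).trans_lt h2⟩
  calc (2 ^ n + n) * (K : ℝ) ^ (-1 : ℝ)
      = (2 ^ n + n) * (K : ℝ) ^ (e * v - 1) * (K : ℝ) ^ (-(e * v)) := by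
        rw [mul_assoc, ← Real.rpow_add hKR]; ring_nf
    _ < (K : ℝ) ^ (-(e * v)) := mul_lt_of_lt_one_left (by positivity) h1
    _ = ((K : ℝ) ^ e) ^ (-v) := by rw [← Real.rpow_mul hKR.le]; ring_nf
    _ ≤ (t : ℝ) ^ (-v) :=
        Real.rpow_le_rpow_of_nonpos (by exact_mod_cast ht0) hte (by linarith)

end transference

/-- For every `x ∈ ℝⁿ`, `w₀(x) = 1/n` if and only if `w_{n-1}(x) = n`. -/
theorem wsim_eq_iff_wdual_eq (n : ℕ) (hn : 0 < n) (x : Fin n → ℝ) :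
    wsim n x = ((1 / (n : ℝ) : ℝ) : EReal) ↔ wdual n x = (((n : ℝ)) : EReal) := by
  have : NeZero n := ⟨hn.ne'⟩
  rw [wsim, wdual, EReal.sSup_setOf_coe_eq_coe_iff (infinite_simSolutions_one_div x),
    EReal.sSup_setOf_coe_eq_coe_iff (infinite_dualSolutions_natCast x)]
  constructor
  · intro hsim u hu
    by_contra! hnu
    obtain ⟨v, hv, hinf⟩ := exists_infinite_simSolutions_of_infinite_dualSolutions x hnu hu
    exact (hsim v hinf).not_gt hv
  · intro hdual v hv
    by_contra! hnv
    obtain ⟨u, hu, hinf⟩ := exists_infinite_dualSolutions_of_infinite_simSolutions x hnv hv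
    exact (hdual u hinf).not_gt hu
end

section
/- Let I ⊂ ℝ be a finite interval and f : I → ℝⁿ be differentiable with f₁(x) = x and C := sup_{x∈I}|f'(x)|_∞ < ∞. For p ∈ ℤⁿ, q ∈ ℤ \ {0}, θ ∈ ℝⁿ, ε > 0 let B := {y : |qy + p + θ|_∞ < |q|^{-1/n-ε}}. If the half-size ball ½B (same centre, half radius) intersects M = f(I), then μ(B ∩ M) ≥ ½·min{C^{-1}, |I|}·|q|^{-1-1/n-ε}. -/
open Real MeasureTheory Filter Set

/-- The inhomogeneous ball `B^θ_{p,q}(ε) = {y : |q y + p + θ|_∞ < |q|^{-1/n-ε}}`. -/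
def inhomBall (n : ℕ) (p : Fin n → ℤ) (q : ℤ) (θ : Fin n → ℝ) (ε : ℝ) :
    Set (Fin n → ℝ) :=
  {y | ∀ i, |(q : ℝ) * y i + (p i : ℝ) + θ i| < |(q : ℝ)| ^ (-(1 / (n : ℝ)) - ε)}

/-- The induced measure `μ(S ∩ M)` of a piece of the curve `M = f(I)`:
`∫_J |f'(x)|₂ dx` where `J = {x ∈ I : f(x) ∈ S}`. -/
noncomputable def curveMass (n : ℕ) (I : Set ℝ) (f f' : ℝ → Fin n → ℝ)
    (S : Set (Fin n → ℝ)) : ℝ :=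
  ∫ x in {x ∈ I | f x ∈ S}, Real.sqrt (∑ i, (f' x i) ^ 2)

set_option maxHeartbeats 1000000 in
/-- Lower bound: if the half-size ball `½ B^θ_{p,q}(ε)` meets the curve
`M = f(I)`, then `μ(B^θ_{p,q}(ε) ∩ M) ≥ ½ min{C⁻¹, |I|} |q|^{-1-1/n-ε}`. -/
theorem curveMass_inhomBall_ge
    (n : ℕ) (hn : 0 < n) (a b : ℝ) (hab : a < b)
    (f f' : ℝ → Fin n → ℝ)
    (hderiv : ∀ x ∈ Icc a b, HasDerivAt f (f' x) x)
    (hf1 : ∀ x ∈ Icc a b, f x ⟨0, hn⟩ = x)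
    (C : ℝ) (hC : ∀ x ∈ Icc a b, (⨆ i, |f' x i|) ≤ C)
    (p : Fin n → ℤ) (q : ℤ) (hq : q ≠ 0) (θ : Fin n → ℝ) (ε : ℝ) (hε : 0 < ε)
    (hhit : ∃ x ∈ Icc a b, ∀ i,
      |(q : ℝ) * f x i + (p i : ℝ) + θ i|
        < (1 / 2) * |(q : ℝ)| ^ (-(1 / (n : ℝ)) - ε)) :
    (1 / 2) * min C⁻¹ (b - a) * |(q : ℝ)| ^ (-1 - 1 / (n : ℝ) - ε)
      ≤ curveMass n (Icc a b) f f' (inhomBall n p q θ ε) := by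
  set i0 : Fin n := ⟨0, hn⟩
  set Q : ℝ := |(q : ℝ)| with hQdef
  have hQ1 : (1 : ℝ) ≤ Q := by
    have h := Int.one_le_abs hq
    show (1 : ℝ) ≤ |(q : ℝ)|
    exact_mod_cast h
  have hQ0 : (0 : ℝ) < Q := lt_of_lt_of_le one_pos hQ1
  set r : ℝ := -1 - 1 / (n : ℝ) - ε with hrdef
  set s : ℝ := -(1 / (n : ℝ)) - ε with hsdef
  have hn0 : (0 : ℝ) < (n : ℝ) := by exact_mod_cast hn
  have hr0 : r ≤ 0 := by
    have : 0 ≤ 1 / (n : ℝ) := by positivity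
    simp only [hrdef]; linarith
  have hQr1 : Q ^ r ≤ 1 := Real.rpow_le_one_of_one_le_of_nonpos hQ1 hr0
  have hQr0 : 0 < Q ^ r := Real.rpow_pos_of_pos hQ0 r
  have hQrs : Q * Q ^ r = Q ^ s := by
    rw [show s = 1 + r by simp [hsdef, hrdef]; ring, Real.rpow_add hQ0, Real.rpow_one]
  -- coordinate derivatives
  have hcoord : ∀ x ∈ Icc a b, ∀ i, HasDerivAt (fun y => f y i) (f' x i) x := by
    intro x hx i
    exact hasDerivAt_pi.mp (hderiv x hx) i
  -- the first coordinate of the derivative is 1 in the interior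
  have hd1 : ∀ x ∈ Ioo a b, f' x i0 = 1 := by
    intro x hx
    have h1 : HasDerivAt (fun y => f y i0) (f' x i0) x :=
      hcoord x (Ioo_subset_Icc_self hx) i0
    have heq : (id : ℝ → ℝ) =ᶠ[nhds x] (fun y => f y i0) := by
      filter_upwards [Ioo_mem_nhds hx.1 hx.2] with y hy
      exact (hf1 y (Ioo_subset_Icc_self hy)).symm
    have h2 : HasDerivAt (id : ℝ → ℝ) (f' x i0) x := h1.congr_of_eventuallyEq heq
    have := h2.unique (hasDerivAt_id x)
    exact this.symm ▸ rfl
  -- bound each coordinate of the derivative by C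
  have hbdd : ∀ x : ℝ, BddAbove (Set.range fun i => |f' x i|) := fun x =>
    (Set.finite_range _).bddAbove
  have hCi : ∀ x ∈ Icc a b, ∀ i, |f' x i| ≤ C := fun x hx i =>
    le_trans (le_ciSup (hbdd x) i) (hC x hx)
  -- C ≥ 1
  have hC1 : (1 : ℝ) ≤ C := by
    have hmid : (a + b) / 2 ∈ Ioo a b := ⟨by linarith, by linarith⟩
    have := hCi _ (Ioo_subset_Icc_self hmid) i0
    rwa [hd1 _ hmid, abs_one] at this
  have hC0 : (0 : ℝ) < C := lt_of_lt_of_le one_pos hC1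
  set m : ℝ := min C⁻¹ (b - a) with hmdef
  have hm0 : 0 < m := lt_min (inv_pos.mpr hC0) (by linarith)
  have hmC : m ≤ C⁻¹ := min_le_left _ _
  have hmb : m ≤ b - a := min_le_right _ _
  set L : ℝ := (1 / 2) * m * Q ^ r with hLdef
  have hL0 : 0 < L := by positivity
  have hLb : L ≤ (b - a) / 2 := by
    have h1 : L ≤ (1 / 2) * (b - a) * 1 := by
      apply mul_le_mul (by nlinarith) hQr1 (le_of_lt hQr0) (by nlinarith)
    linarith
  have hCL : C * L ≤ (1 / 2) * Q ^ r := by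
    have h1 : C * m ≤ 1 := by
      calc C * m ≤ C * C⁻¹ := by nlinarith
      _ = 1 := mul_inv_cancel₀ (ne_of_gt hC0)
    calc C * L = (1 / 2) * (C * m) * Q ^ r := by ring
    _ ≤ (1 / 2) * 1 * Q ^ r := by nlinarith
    _ = (1 / 2) * Q ^ r := by ring
  obtain ⟨x₀, hx₀, hhit₀⟩ := hhit
  -- choose the subinterval K = [c, c+L]
  set c : ℝ := if x₀ ≤ (a + b) / 2 then x₀ else x₀ - L with hcdef
  have hckey : a ≤ c ∧ c + L ≤ b ∧ c ≤ x₀ ∧ x₀ ≤ c + L := by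
    by_cases h : x₀ ≤ (a + b) / 2
    · simp only [hcdef, if_pos h]
      exact ⟨hx₀.1, by linarith, le_refl _, by linarith⟩
    · simp only [hcdef, if_neg h]
      push_neg at h
      exact ⟨by linarith, by linarith [hx₀.2], by linarith, by linarith⟩
  obtain ⟨hac, hcb, hcx₀, hx₀c⟩ := hckey
  set K : Set ℝ := Icc c (c + L) with hKdef
  have hKIcc : K ⊆ Icc a b := fun x hx => ⟨le_trans hac hx.1, le_trans hx.2 hcb⟩
  -- K lands in the ball
  set J : Set ℝ := {x ∈ Icc a b | f x ∈ inhomBall n p q θ ε} with hJdef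
  have hKJ : K ⊆ J := by
    intro x hx
    refine ⟨hKIcc hx, fun i => ?_⟩
    have hxx₀ : |x - x₀| ≤ L := by
      rw [abs_le]; constructor <;> [linarith [hx.1]; linarith [hx.2]]
    have hmvt : |f x i - f x₀ i| ≤ C * |x - x₀| := by
      have := Convex.norm_image_sub_le_of_norm_hasDerivWithin_le
        (f := fun y => f y i) (f' := fun y => f' y i) (s := Icc a b) (C := C)
        (fun y hy => (hcoord y hy i).hasDerivWithinAt)
        (fun y hy => by simpa using hCi y hy i) (convex_Icc a b) hx₀ (hKIcc hx)
      simpa [Real.norm_eq_abs] using this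
    have hdiff : |f x i - f x₀ i| ≤ C * L :=
      le_trans hmvt (by nlinarith [hCi x (hKIcc hx) i])
    have key : |(q : ℝ) * f x i + (p i : ℝ) + θ i|
        ≤ Q * |f x i - f x₀ i| + |(q : ℝ) * f x₀ i + (p i : ℝ) + θ i| := by
      have : (q : ℝ) * f x i + (p i : ℝ) + θ i
          = (q : ℝ) * (f x i - f x₀ i) + ((q : ℝ) * f x₀ i + (p i : ℝ) + θ i) := by ring
      rw [this]
      calc |(q : ℝ) * (f x i - f x₀ i) + ((q : ℝ) * f x₀ i + (p i : ℝ) + θ i)|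
          ≤ |(q : ℝ) * (f x i - f x₀ i)| + |(q : ℝ) * f x₀ i + (p i : ℝ) + θ i| :=
            abs_add_le _ _
        _ = Q * |f x i - f x₀ i| + |(q : ℝ) * f x₀ i + (p i : ℝ) + θ i| := by
            rw [abs_mul]
    calc |(q : ℝ) * f x i + (p i : ℝ) + θ i|
        ≤ Q * |f x i - f x₀ i| + |(q : ℝ) * f x₀ i + (p i : ℝ) + θ i| := key
      _ < Q * (C * L) + (1 / 2) * Q ^ s := by
          have h2 := hhit₀ i
          have h3 : Q * |f x i - f x₀ i| ≤ Q * (C * L) :=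
            mul_le_mul_of_nonneg_left hdiff (le_of_lt hQ0)
          exact add_lt_add_of_le_of_lt h3 h2
      _ ≤ Q * ((1 / 2) * Q ^ r) + (1 / 2) * Q ^ s :=
          add_le_add_left (mul_le_mul_of_nonneg_left hCL (le_of_lt hQ0)) _
      _ = Q ^ s := by rw [show Q * ((1/2) * Q ^ r) = (1/2) * (Q * Q ^ r) by ring, hQrs]; ring
  -- the integrand
  set g : ℝ → ℝ := fun x => Real.sqrt (∑ i, (f' x i) ^ 2) with hgdef
  have hg0 : ∀ x, 0 ≤ g x := fun x => Real.sqrt_nonneg _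
  -- measurability of g on Icc a b
  have hgm : AEStronglyMeasurable g (volume.restrict (Icc a b)) := by
    have hmeas : Measurable fun x => Real.sqrt (∑ i, (deriv (fun y => f y i) x) ^ 2) := by
      apply Measurable.sqrt
      exact Finset.measurable_sum _ fun i _ => ((measurable_deriv _).pow_const 2)
    apply hmeas.aestronglyMeasurable.congr
    filter_upwards [ae_restrict_mem measurableSet_Icc] with x hx
    simp only [hgdef]
    congr 1
    exact Finset.sum_congr rfl fun i _ => by rw [(hcoord x hx i).deriv]
  -- integrability of g on Icc a b
  have hgbound : ∀ᵐ x ∂volume.restrict (Icc a b), ‖g x‖ ≤ Real.sqrt n * C := by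
    filter_upwards [ae_restrict_mem measurableSet_Icc] with x hx
    rw [Real.norm_eq_abs, abs_of_nonneg (hg0 x)]
    have h1 : (∑ i, (f' x i) ^ 2) ≤ ∑ _i : Fin n, C ^ 2 := by
      apply Finset.sum_le_sum
      intro i _
      have := hCi x hx i
      nlinarith [abs_nonneg (f' x i), sq_abs (f' x i)]
    calc g x ≤ Real.sqrt (∑ _i : Fin n, C ^ 2) := Real.sqrt_le_sqrt h1
      _ = Real.sqrt ((n : ℝ) * C ^ 2) := by simp [Finset.sum_const, mul_comm]
      _ = Real.sqrt n * C := by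
          rw [Real.sqrt_mul (Nat.cast_nonneg n), Real.sqrt_sq (le_of_lt hC0)]
  have hgint : IntegrableOn g (Icc a b) := by
    exact Integrable.mono' (integrable_const _) hgm hgbound
  have hgintJ : IntegrableOn g J := hgint.mono_set fun x hx => hx.1
  have hgintK : IntegrableOn g K := hgint.mono_set hKIcc
  -- g ≥ 1 a.e. on K
  have hg1 : ∀ᵐ x ∂volume.restrict K, 1 ≤ g x := by
    have hab0 : volume ({a, b} : Set ℝ) = 0 := by
      exact Set.Finite.measure_zero (by simp : ({a, b} : Set ℝ).Finite) volume
    have h1 : ∀ᵐ x ∂volume.restrict K, x ∉ ({a, b} : Set ℝ) := by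
      apply ae_restrict_of_ae
      exact measure_eq_zero_iff_ae_notMem.mp hab0
    filter_upwards [ae_restrict_mem measurableSet_Icc, h1] with x hx hxab
    have hxIcc := hKIcc hx
    have hxIoo : x ∈ Ioo a b := by
      simp only [Set.mem_insert_iff, Set.mem_singleton_iff, not_or] at hxab
      exact ⟨lt_of_le_of_ne hxIcc.1 (Ne.symm hxab.1), lt_of_le_of_ne hxIcc.2 hxab.2⟩
    have hkey : (1 : ℝ) ≤ ∑ i, (f' x i) ^ 2 := by
      have h2 : (f' x i0) ^ 2 ≤ ∑ i, (f' x i) ^ 2 :=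
        Finset.single_le_sum (f := fun i => f' x i ^ 2) (fun i _ => sq_nonneg _) (Finset.mem_univ i0)
      rw [hd1 x hxIoo] at h2
      simpa using h2
    calc (1 : ℝ) = Real.sqrt 1 := (Real.sqrt_one).symm
      _ ≤ g x := Real.sqrt_le_sqrt hkey
  -- the measure of K
  have hKvol : (volume K).toReal = L := by
    rw [hKdef, Real.volume_Icc]
    simp [ENNReal.toReal_ofReal (le_of_lt hL0)]
  -- final chain
  have step1 : (1 / 2) * m * Q ^ r = ∫ x in K, (1 : ℝ) := by
    rw [setIntegral_const, measureReal_def, hKvol, smul_eq_mul, mul_one, hLdef]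
  have step2 : (∫ x in K, (1 : ℝ)) ≤ ∫ x in K, g x := by
    apply integral_mono_ae (integrable_const _) hgintK hg1
  have step3 : (∫ x in K, g x) ≤ ∫ x in J, g x := by
    apply setIntegral_mono_set hgintJ
    · filter_upwards with x using hg0 x
    · exact HasSubset.Subset.eventuallyLE hKJ
  calc (1 / 2) * min C⁻¹ (b - a) * |(q : ℝ)| ^ (-1 - 1 / (n : ℝ) - ε)
      = (1 / 2) * m * Q ^ r := rfl
    _ ≤ ∫ x in J, g x := by rw [step1]; exact le_trans step2 step3
    _ = curveMass n (Icc a b) f f' (inhomBall n p q θ ε) := rfl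
end

section
/- Let I, f, C, M, μ be as above (f₁(x)=x, C = sup|f'|_∞ < ∞). For any p ∈ ℤⁿ, q ∈ ℤ, ε > 0, θ ∈ ℝⁿ with |q| > 2/ε and B^θ_{p,q}(ε) ∩ M ≠ ∅, one has μ(B^θ_{p,q}(ε) ∩ M) ≤ (4nC/min{C^{-1},|I|})·|q|^{-ε/2}·μ(B^θ_{p,q}(ε/2) ∩ M), where B^θ_{p,q}(ε) := {y ∈ ℝⁿ : |qy + p + θ|_∞ < |q|^{-1/n-ε}}. -/
open Real MeasureTheory Filter Set

/-!
Since the first coordinate of `f` is the identity, the parameters `x ∈ I` with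
`f x ∈ B(ε)` lie in an interval of length `2|q|^(-1/n-ε)/|q|`, and the speed `|f'|₂` lies
between `1` and `nC`; this bounds `μ(B(ε) ∩ M)` from above. If `|q|^(-ε/2) < 1/2`, the radius
of `B(ε)` is less than half that of `B(ε/2)`, and `f` is `C`-Lipschitz in the sup norm, so a
parameter interval of length `min(|q|^(-1/n-ε/2)/(2|q|C), |I|)` around a point of `B(ε) ∩ M`
maps into `B(ε/2)`; this bounds `μ(B(ε/2) ∩ M)` from below. If `|q|^(-ε/2) ≥ 1/2`, the
constant is at least `1` and the inclusion `B(ε) ⊆ B(ε/2)` suffices.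
-/

section EuclideanLength

variable {ι : Type*} [Fintype ι]

theorem abs_le_sqrt_sum_sq (v : ι → ℝ) (i : ι) : |v i| ≤ √(∑ j, v j ^ 2) :=
  Real.abs_le_sqrt <| Finset.single_le_sum (fun j _ => sq_nonneg (v j)) (Finset.mem_univ i)

theorem sqrt_sum_sq_le_sqrt_card_mul_norm (v : ι → ℝ) :
    √(∑ i, v i ^ 2) ≤ √(Fintype.card ι) * ‖v‖ := by
  have hsum : ∑ i, v i ^ 2 ≤ Fintype.card ι * ‖v‖ ^ 2 := by
    calc ∑ i, v i ^ 2 ≤ ∑ _i : ι, ‖v‖ ^ 2 := Finset.sum_le_sum fun i _ => by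
          simpa only [Real.norm_eq_abs, sq_abs] using
            pow_le_pow_left₀ (norm_nonneg _) (norm_le_pi_norm v i) 2
      _ = Fintype.card ι * ‖v‖ ^ 2 := by simp
  calc √(∑ i, v i ^ 2) ≤ √(Fintype.card ι * ‖v‖ ^ 2) := Real.sqrt_le_sqrt hsum
    _ = √(Fintype.card ι) * ‖v‖ := by
      rw [Real.sqrt_mul (Nat.cast_nonneg _), Real.sqrt_sq (norm_nonneg _)]

theorem norm_le_iSup_abs (v : ι → ℝ) : ‖v‖ ≤ ⨆ i, |v i| :=
  (pi_norm_le_iff_of_nonneg (Real.iSup_nonneg fun i => abs_nonneg (v i))).2 fun i =>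
    le_ciSup (Set.finite_range fun i => |v i|).bddAbove i

end EuclideanLength

theorem eq_one_of_hasDerivWithinAt_of_eqOn_id {a b x g' : ℝ} {g : ℝ → ℝ} (hab : a < b)
    (hx : x ∈ Icc a b) (hg : HasDerivWithinAt g g' (Icc a b) x) (hid : EqOn g id (Icc a b)) :
    g' = 1 :=
  (uniqueDiffOn_Icc hab x hx).eq_deriv _ hg ((hasDerivWithinAt_id x _).congr hid (hid hx))

theorem aestronglyMeasurable_of_hasDerivWithinAt_Icc {F : Type*} [NormedAddCommGroup F]
    [NormedSpace ℝ F] [CompleteSpace F] {a b : ℝ} {f f' : ℝ → F}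
    (hderiv : ∀ x ∈ Icc a b, HasDerivWithinAt f (f' x) (Icc a b) x) :
    AEStronglyMeasurable f' (volume.restrict (Icc a b)) := by
  rw [← Measure.restrict_congr_set Ioo_ae_eq_Icc]
  refine (aestronglyMeasurable_deriv f _).congr (ae_restrict_of_forall_mem measurableSet_Ioo ?_)
  exact fun x hx =>
    ((hderiv x (Ioo_subset_Icc_self hx)).hasDerivAt (Icc_mem_nhds hx.1 hx.2)).deriv

open scoped ENNReal

section CurveMass

variable {n : ℕ} {I : Set ℝ} {f f' : ℝ → Fin n → ℝ} {S T : Set (Fin n → ℝ)}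

theorem curveMass_nonneg : 0 ≤ curveMass n I f f' S :=
  integral_nonneg fun _ => Real.sqrt_nonneg _

theorem curveMass_le_mul_volumeReal {K : ℝ} (hfin : volume {x ∈ I | f x ∈ S} < ∞)
    (hK : ∀ x ∈ I, √(∑ i, f' x i ^ 2) ≤ K) :
    curveMass n I f f' S ≤ K * volume.real {x ∈ I | f x ∈ S} :=
  (le_abs_self _).trans <| norm_setIntegral_le_of_norm_le_const hfin fun x hx =>
    (Real.norm_of_nonneg (Real.sqrt_nonneg _)).trans_le (hK x hx.1)

theorem curveMass_mono (hint : IntegrableOn (fun x => √(∑ i, f' x i ^ 2)) I) (hST : S ⊆ T) :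
    curveMass n I f f' S ≤ curveMass n I f f' T :=
  setIntegral_mono_set (hint.mono_set fun _ hx => hx.1)
    (Eventually.of_forall fun _ => Real.sqrt_nonneg _)
    (Eventually.of_forall fun _ hx => ⟨hx.1, hST hx.2⟩)

theorem volumeReal_le_curveMass (hint : IntegrableOn (fun x => √(∑ i, f' x i ^ 2)) I)
    (hone : ∀ x ∈ I, 1 ≤ √(∑ i, f' x i ^ 2)) {J : Set ℝ} (hJ : MeasurableSet J)
    (hJfin : volume J ≠ ∞) (hJS : J ⊆ {x ∈ I | f x ∈ S}) :
    volume.real J ≤ curveMass n I f f' S := by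
  calc volume.real J = 1 * volume.real J := (one_mul _).symm
    _ ≤ ∫ x in J, √(∑ i, f' x i ^ 2) :=
        setIntegral_ge_of_const_le_real hJ hJfin (fun x hx => hone x (hJS hx).1)
          (hint.mono_set fun x hx => (hJS hx).1)
    _ ≤ curveMass n I f f' S :=
        setIntegral_mono_set (hint.mono_set fun _ hx => hx.1)
          (Eventually.of_forall fun _ => Real.sqrt_nonneg _) (Eventually.of_forall hJS)

end CurveMass

theorem integrableOn_sqrt_sum_sq_of_hasDerivWithinAt {n : ℕ} {a b C : ℝ}
    {f f' : ℝ → Fin n → ℝ} (hderiv : ∀ x ∈ Icc a b, HasDerivWithinAt f (f' x) (Icc a b) x)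
    (hC : ∀ x ∈ Icc a b, ‖f' x‖ ≤ C) :
    IntegrableOn (fun x => √(∑ i, f' x i ^ 2)) (Icc a b) := by
  refine .of_bound measure_Icc_lt_top ?_ (√n * C)
    (ae_restrict_of_forall_mem measurableSet_Icc ?_)
  · exact (by fun_prop : Continuous fun v : Fin n → ℝ => √(∑ i, v i ^ 2))
      |>.comp_aestronglyMeasurable (aestronglyMeasurable_of_hasDerivWithinAt_Icc hderiv)
  · intro x hx
    rw [Real.norm_of_nonneg (Real.sqrt_nonneg _)]
    simpa using (sqrt_sum_sq_le_sqrt_card_mul_norm (f' x)).trans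
      (mul_le_mul_of_nonneg_left (hC x hx) (Real.sqrt_nonneg _))

theorem min_le_volumeReal_Icc_inter_closedBall {a b x δ : ℝ} (hx : x ∈ Icc a b) (hδ : 0 ≤ δ) :
    min δ (b - a) ≤ volume.real (Icc a b ∩ Metric.closedBall x δ) := by
  rw [Real.closedBall_eq_Icc, Icc_inter_Icc, Real.volume_real_Icc]
  obtain ⟨hax, hxb⟩ := hx
  refine le_max_of_le_left ?_
  rcases le_total (x - δ) a with h₁ | h₁ <;> rcases le_total (x + δ) b with h₂ | h₂ <;>
    simp only [max_eq_left, max_eq_right, min_eq_left, min_eq_right, h₁, h₂] <;>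
    first | exact min_le_of_left_le (by linarith) | exact min_le_of_right_le (by linarith)

section InhomBall

variable {n : ℕ} {p : Fin n → ℤ} {q : ℤ} {θ : Fin n → ℝ} {ε ε' : ℝ}

theorem inhomBall_subset_of_le (hq : 1 ≤ |(q : ℝ)|) (h : ε' ≤ ε) :
    inhomBall n p q θ ε ⊆ inhomBall n p q θ ε' := fun _ hy i =>
  (hy i).trans_le <| Real.rpow_le_rpow_of_exponent_le hq (by linarith)

theorem mem_ball_of_mem_inhomBall (hq : q ≠ 0) {y : Fin n → ℝ} (hy : y ∈ inhomBall n p q θ ε)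
    (i : Fin n) :
    y i ∈ Metric.ball (-(p i + θ i) / q) (|(q : ℝ)| ^ (-(1 / (n : ℝ)) - ε) / |(q : ℝ)|) := by
  have hq' : (q : ℝ) ≠ 0 := Int.cast_ne_zero.2 hq
  rw [Metric.mem_ball, Real.dist_eq, lt_div_iff₀ (abs_pos.2 hq'), ← abs_mul]
  calc |(y i - -(p i + θ i) / q) * q| = |(q : ℝ) * y i + p i + θ i| := by
        congr 1; field_simp; ring
    _ < _ := hy i

theorem mem_inhomBall_of_dist_le {y z : Fin n → ℝ} (hy : y ∈ inhomBall n p q θ ε)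
    (h : |(q : ℝ)| * dist z y + |(q : ℝ)| ^ (-(1 / (n : ℝ)) - ε)
      ≤ |(q : ℝ)| ^ (-(1 / (n : ℝ)) - ε')) :
    z ∈ inhomBall n p q θ ε' := fun i => by
  have hzy : |(q : ℝ) * (z i - y i)| ≤ |(q : ℝ)| * dist z y := by
    rw [abs_mul, ← Real.dist_eq]
    exact mul_le_mul_of_nonneg_left (dist_le_pi_dist z y i) (abs_nonneg _)
  calc |(q : ℝ) * z i + p i + θ i|
      = |((q : ℝ) * y i + p i + θ i) + q * (z i - y i)| := by ring_nf
    _ ≤ |(q : ℝ) * y i + p i + θ i| + |(q : ℝ) * (z i - y i)| := abs_add_le _ _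
    _ < |(q : ℝ)| ^ (-(1 / (n : ℝ)) - ε) + |(q : ℝ)| * dist z y :=
        add_lt_add_of_lt_of_le (hy i) hzy
    _ ≤ _ := by linarith

end InhomBall

theorem curveMass_inhomBall_le {n : ℕ} {I : Set ℝ} {f f' : ℝ → Fin n → ℝ} {K : ℝ} (hK0 : 0 ≤ K)
    (hK : ∀ x ∈ I, √(∑ i, f' x i ^ 2) ≤ K) (i₀ : Fin n) (hf : ∀ x ∈ I, f x i₀ = x)
    (p : Fin n → ℤ) {q : ℤ} (hq : q ≠ 0) (θ : Fin n → ℝ) (ε : ℝ) :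
    curveMass n I f f' (inhomBall n p q θ ε)
      ≤ K * (2 * (|(q : ℝ)| ^ (-(1 / (n : ℝ)) - ε) / |(q : ℝ)|)) := by
  set c := -(p i₀ + θ i₀) / (q : ℝ)
  set r := |(q : ℝ)| ^ (-(1 / (n : ℝ)) - ε) / |(q : ℝ)|
  have hsub : {x ∈ I | f x ∈ inhomBall n p q θ ε} ⊆ Metric.ball c r := fun x hx => by
    simpa only [hf x hx.1] using mem_ball_of_mem_inhomBall hq hx.2 i₀
  have hr : 0 ≤ r := by positivity
  calc curveMass n I f f' (inhomBall n p q θ ε)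
      ≤ K * volume.real {x ∈ I | f x ∈ inhomBall n p q θ ε} :=
        curveMass_le_mul_volumeReal ((measure_mono hsub).trans_lt measure_ball_lt_top) hK
    _ ≤ K * volume.real (Metric.ball c r) := by gcongr; exact measure_ball_lt_top.ne
    _ = K * (2 * r) := by rw [Real.volume_real_ball hr]

theorem min_le_curveMass_inhomBall {n : ℕ} {a b C : ℝ} {f f' : ℝ → Fin n → ℝ}
    (hint : IntegrableOn (fun x => √(∑ i, f' x i ^ 2)) (Icc a b))
    (hone : ∀ x ∈ Icc a b, 1 ≤ √(∑ i, f' x i ^ 2))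
    (hC : 0 ≤ C) (hlip : ∀ x ∈ Icc a b, ∀ y ∈ Icc a b, dist (f x) (f y) ≤ C * dist x y)
    {p : Fin n → ℤ} {q : ℤ} {θ : Fin n → ℝ} {ε ε' δ : ℝ} (hδ : 0 ≤ δ) {x₀ : ℝ}
    (hx₀ : x₀ ∈ Icc a b) (hfx₀ : f x₀ ∈ inhomBall n p q θ ε)
    (hr : |(q : ℝ)| * (C * δ) + |(q : ℝ)| ^ (-(1 / (n : ℝ)) - ε)
      ≤ |(q : ℝ)| ^ (-(1 / (n : ℝ)) - ε')) :
    min δ (b - a) ≤ curveMass n (Icc a b) f f' (inhomBall n p q θ ε') := by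
  refine (min_le_volumeReal_Icc_inter_closedBall hx₀ hδ).trans <|
    volumeReal_le_curveMass hint hone (measurableSet_Icc.inter measurableSet_closedBall)
      (measure_inter_lt_top_of_right_ne_top measure_closedBall_lt_top.ne).ne ?_
  rintro x ⟨hx, hxδ⟩
  refine ⟨hx, mem_inhomBall_of_dist_le hfx₀ (le_trans ?_ hr)⟩
  gcongr
  exact (hlip x hx x₀ hx₀).trans (mul_le_mul_of_nonneg_left hxδ hC)

theorem curveMass_inhomBall_le_of_rpow_lt_half {n : ℕ} {a b C K : ℝ} {f f' : ℝ → Fin n → ℝ}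
    (hab : a < b) (hderiv : ∀ x ∈ Icc a b, HasDerivWithinAt f (f' x) (Icc a b) x)
    (hC : 0 < C) (hf'C : ∀ x ∈ Icc a b, ‖f' x‖ ≤ C)
    (hone : ∀ x ∈ Icc a b, 1 ≤ √(∑ i, f' x i ^ 2)) (hK : ∀ x ∈ Icc a b, √(∑ i, f' x i ^ 2) ≤ K)
    (i₀ : Fin n) (hf : ∀ x ∈ Icc a b, f x i₀ = x) {p : Fin n → ℤ} {q : ℤ} {θ : Fin n → ℝ} {ε : ℝ}
    (hq : 1 ≤ |(q : ℝ)|) (hη : |(q : ℝ)| ^ (-(ε / 2)) < 1 / 2) {x₀ : ℝ} (hx₀ : x₀ ∈ Icc a b)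
    (hfx₀ : f x₀ ∈ inhomBall n p q θ ε) :
    curveMass n (Icc a b) f f' (inhomBall n p q θ ε)
      ≤ 4 * K / min C⁻¹ (b - a) * |(q : ℝ)| ^ (-(ε / 2))
          * curveMass n (Icc a b) f f' (inhomBall n p q θ (ε / 2)) := by
  have hq0 : q ≠ 0 := by rintro rfl; norm_num at hq
  have ha := left_mem_Icc.2 hab.le
  have hK0 : 0 ≤ K := zero_le_one.trans ((hone a ha).trans (hK a ha))
  have hlip : ∀ x ∈ Icc a b, ∀ y ∈ Icc a b, dist (f x) (f y) ≤ C * dist x y :=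
    fun x hx y hy => by
    simpa only [dist_eq_norm] using
      (convex_Icc a b).norm_image_sub_le_of_norm_hasDerivWithin_le hderiv hf'C hy hx
  set Q := |(q : ℝ)|
  set η := Q ^ (-(ε / 2))
  set ρ := Q ^ (-(1 / (n : ℝ)) - ε / 2)
  set m := min C⁻¹ (b - a)
  have hm : 0 < m := lt_min (by positivity) (by linarith)
  have hρη : Q ^ (-(1 / (n : ℝ)) - ε) = ρ * η := by
    rw [← Real.rpow_add (by linarith)]; ring_nf
  have hρ : ρ ≤ η := by
    rw [show ρ = Q ^ (-(1 / (n : ℝ))) * η by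
      simp only [ρ, η]; rw [← Real.rpow_add (by linarith)]; ring_nf]
    refine mul_le_of_le_one_left (by positivity) (Real.rpow_le_one_of_one_le_of_nonpos hq ?_)
    simp only [one_div, Left.neg_nonpos_iff]
    positivity
  have hup : curveMass n (Icc a b) f f' (inhomBall n p q θ ε) ≤ K * (2 * (ρ * η / Q)) :=
    hρη ▸ curveMass_inhomBall_le hK0 hK i₀ hf p hq0 θ ε
  -- `Q C δ` is half the radius of `B(ε/2)`; the radius of `B(ε)` is less than the other half
  have hlow : min (ρ / (2 * Q * C)) (b - a)
      ≤ curveMass n (Icc a b) f f' (inhomBall n p q θ (ε / 2)) := by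
    refine min_le_curveMass_inhomBall (integrableOn_sqrt_sum_sq_of_hasDerivWithinAt hderiv hf'C)
      hone hC.le hlip (by positivity) hx₀ hfx₀ ?_
    have hhalf : Q * (C * (ρ / (2 * Q * C))) = ρ / 2 := by field_simp
    rw [hρη, hhalf]
    nlinarith [show 0 < ρ by positivity]
  refine hup.trans <| le_trans ?_ (mul_le_mul_of_nonneg_left hlow (by positivity))
  rw [mul_min_of_nonneg _ _ (by positivity)]
  refine le_min ?_ ?_
  · calc K * (2 * (ρ * η / Q)) = 2 * K * ρ * η / Q * 1 := by ring
      _ ≤ 2 * K * ρ * η / Q * (C⁻¹ / m) := by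
        gcongr; rw [one_le_div hm]; exact min_le_left _ _
      _ = _ := by field_simp; ring
  · calc K * (2 * (ρ * η / Q)) = 2 * K * η * (ρ / Q) := by ring
      _ ≤ 2 * K * η * (2 * (b - a) / m) := by
        refine mul_le_mul_of_nonneg_left ?_ (by positivity)
        rw [div_le_iff₀ (by positivity), div_mul_eq_mul_div, le_div_iff₀ hm]
        nlinarith [min_le_right C⁻¹ (b - a)]
      _ = _ := by ring

theorem curveMass_inhomBall_le_mul_curveMass_half {n : ℕ} {a b C K : ℝ}
    {f f' : ℝ → Fin n → ℝ} (hab : a < b)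
    (hderiv : ∀ x ∈ Icc a b, HasDerivWithinAt f (f' x) (Icc a b) x)
    (hf'C : ∀ x ∈ Icc a b, ‖f' x‖ ≤ C) (hK : ∀ x ∈ Icc a b, √(∑ i, f' x i ^ 2) ≤ K)
    (i₀ : Fin n) (hf : ∀ x ∈ Icc a b, f x i₀ = x) {p : Fin n → ℤ} {q : ℤ} {θ : Fin n → ℝ} {ε : ℝ}
    (hq : 1 ≤ |(q : ℝ)|) (hε : 0 ≤ ε) {x₀ : ℝ} (hx₀ : x₀ ∈ Icc a b)
    (hfx₀ : f x₀ ∈ inhomBall n p q θ ε) :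
    curveMass n (Icc a b) f f' (inhomBall n p q θ ε)
      ≤ 4 * K / min C⁻¹ (b - a) * |(q : ℝ)| ^ (-(ε / 2))
          * curveMass n (Icc a b) f f' (inhomBall n p q θ (ε / 2)) := by
  have hf'₁ : ∀ x ∈ Icc a b, f' x i₀ = 1 := fun x hx =>
    eq_one_of_hasDerivWithinAt_of_eqOn_id hab hx (hasDerivWithinAt_pi.1 (hderiv x hx) i₀) hf
  have hone : ∀ x ∈ Icc a b, 1 ≤ √(∑ i, f' x i ^ 2) := fun x hx => by
    simpa only [hf'₁ x hx, abs_one] using abs_le_sqrt_sum_sq (f' x) i₀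
  have ha := left_mem_Icc.2 hab.le
  have hC : 1 ≤ C := by
    simpa only [hf'₁ a ha, Real.norm_eq_abs, abs_one] using
      (norm_le_pi_norm (f' a) i₀).trans (hf'C a ha)
  rcases le_or_gt (1 / 2) (|(q : ℝ)| ^ (-(ε / 2))) with hη | hη
  · refine (curveMass_mono (integrableOn_sqrt_sum_sq_of_hasDerivWithinAt hderiv hf'C)
      (inhomBall_subset_of_le hq (by linarith))).trans
        (le_mul_of_one_le_left curveMass_nonneg ?_)
    have hm : 1 ≤ (min C⁻¹ (b - a))⁻¹ := hC.trans <|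
      (le_inv_comm₀ (lt_min (by positivity) (by linarith)) (by positivity)).1 (min_le_left _ _)
    have hK₁ : 1 ≤ K := (hone a ha).trans (hK a ha)
    calc (1 : ℝ) ≤ 4 * 1 * 1 * (1 / 2) := by norm_num
      _ ≤ 4 * K * (min C⁻¹ (b - a))⁻¹ * |(q : ℝ)| ^ (-(ε / 2)) := by gcongr
      _ = 4 * K / min C⁻¹ (b - a) * |(q : ℝ)| ^ (-(ε / 2)) := by ring
  · exact curveMass_inhomBall_le_of_rpow_lt_half hab hderiv (by linarith) hf'C hone hK i₀ hf hq hη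
      hx₀ hfx₀

/-- If `|q| > 2/ε` and `B^θ_{p,q}(ε)` meets the curve `M = f(I)`, then
`μ(B^θ_{p,q}(ε) ∩ M) ≤ (4nC / min{C⁻¹,|I|}) |q|^{-ε/2} μ(B^θ_{p,q}(ε/2) ∩ M)`. -/
theorem curveMass_inhomBall_compare
    (n : ℕ) (hn : 0 < n) (a b : ℝ) (hab : a < b)
    (f f' : ℝ → Fin n → ℝ)
    (hderiv : ∀ x ∈ Icc a b, HasDerivAt f (f' x) x)
    (hf1 : ∀ x ∈ Icc a b, f x ⟨0, hn⟩ = x)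
    (C : ℝ) (hC : ∀ x ∈ Icc a b, (⨆ i, |f' x i|) ≤ C)
    (p : Fin n → ℤ) (q : ℤ) (θ : Fin n → ℝ) (ε : ℝ) (hε : 0 < ε)
    (hq : 2 / ε < |(q : ℝ)|)
    (hhit : ∃ x ∈ Icc a b, f x ∈ inhomBall n p q θ ε) :
    curveMass n (Icc a b) f f' (inhomBall n p q θ ε)
      ≤ (4 * n * C / min C⁻¹ (b - a)) * |(q : ℝ)| ^ (-(ε / 2))
          * curveMass n (Icc a b) f f' (inhomBall n p q θ (ε / 2)) := by
  obtain ⟨x₀, hx₀, hfx₀⟩ := hhit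
  have hf'C : ∀ x ∈ Icc a b, ‖f' x‖ ≤ C := fun x hx =>
    (norm_le_iSup_abs _).trans (hC x hx)
  have hspeed : ∀ x ∈ Icc a b, √(∑ i, f' x i ^ 2) ≤ n * C := fun x hx => by
    refine (sqrt_sum_sq_le_sqrt_card_mul_norm (f' x)).trans ?_
    rw [Fintype.card_fin]
    exact mul_le_mul (Real.sqrt_le_self_iff.2 (.inr (Nat.one_le_cast.2 hn))) (hf'C x hx)
      (norm_nonneg _) (Nat.cast_nonneg n)
  have hq₁ : 1 ≤ |(q : ℝ)| := by
    have hq0 : q ≠ 0 := by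
      rintro rfl
      simp only [Int.cast_zero, abs_zero] at hq
      exact (div_pos two_pos hε).not_gt hq
    exact_mod_cast Int.one_le_abs hq0
  simpa only [mul_assoc] using curveMass_inhomBall_le_mul_curveMass_half hab
    (fun x hx => (hderiv x hx).hasDerivWithinAt) hf'C hspeed ⟨0, hn⟩ hf1 hq₁ hε.le hx₀ hfx₀
end
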